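/- arXiv:1809.08280 — 5 statements merged into one kernel-verified Lean document; each statement's English description precedes it below -/
import Mathlib

section
/- Let S be an N×N real symmetric positive definite matrix and let E be the N×N diagonal matrix with E_{ii} = ε^{i-1} for some 0 < ε < 1. If λ_1 ≥ λ_2 ≥ ... ≥ λ_N are the eigenvalues of ESE, then for every 1 ≤ m ≤ N−1, λ_{m+1} ≤ (ε^{2m}/(1−ε²)) · max_{1≤j,k≤N} |S_{jk}|. -/
/-!
Courant–Fischer in its easy direction: the eigenvectors for `λ₁, …, λ_{m+1}` span an
`(m+1)`-dimensional space on which the quadratic form of `ESE` is at least `λ_{m+1} ‖x‖²`, so it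
contains a vector `x ≠ 0` whose first `m` coordinates vanish. For such `x`, writing `w = E x`,
`xᵀ ESE x = wᵀ S w ≤ max |S_{jk}| · (∑ |w_j|)²`, and Cauchy–Schwarz against the weights `ε^j`,
`j ≥ m`, bounds `(∑ |w_j|)²` by `ε^{2m} / (1 - ε²) · ‖x‖²`.
-/

open Matrix Finset
open scoped RealInnerProductSpace

section MinMax

variable {E F ι : Type*} [NormedAddCommGroup E] [InnerProductSpace ℝ E] [Fintype ι]
  {T : E →ₗ[ℝ] E} {v : ι → E} {μ : ι → ℝ} {c : ℝ}

theorem Orthonormal.mul_inner_self_le_inner_map_self_of_mem_span (hv : Orthonormal ℝ v)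
    (hTv : ∀ i, T (v i) = μ i • v i) (hc : ∀ i, c ≤ μ i) {x : E}
    (hx : x ∈ Submodule.span ℝ (Set.range v)) : c * ⟪x, x⟫ ≤ ⟪x, T x⟫ := by
  obtain ⟨a, rfl⟩ := (Submodule.mem_span_range_iff_exists_fun ℝ).mp hx
  have hTx : T (∑ i, a i • v i) = ∑ i, (a i * μ i) • v i := by
    simp only [map_sum, map_smul, hTv, smul_smul]
  rw [hTx, hv.inner_sum, hv.inner_sum, Finset.mul_sum]
  refine Finset.sum_le_sum fun i _ => ?_
  simp only [conj_trivial]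
  nlinarith [mul_self_nonneg (a i), hc i]

theorem Orthonormal.exists_ne_zero_map_eq_zero_mul_inner_self_le [AddCommGroup F] [Module ℝ F]
    [FiniteDimensional ℝ F] (hv : Orthonormal ℝ v) (hTv : ∀ i, T (v i) = μ i • v i)
    (hc : ∀ i, c ≤ μ i) (P : E →ₗ[ℝ] F) (hP : Module.finrank ℝ F < Fintype.card ι) :
    ∃ x ≠ 0, P x = 0 ∧ c * ⟪x, x⟫ ≤ ⟪x, T x⟫ := by
  set U := Submodule.span ℝ (Set.range v)
  have : FiniteDimensional ℝ U := .span_of_finite ℝ (Set.finite_range v)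
  have hU : Module.finrank ℝ U = Fintype.card ι := finrank_span_eq_card hv.linearIndependent
  obtain ⟨⟨x, hxU⟩, hker, hx0⟩ := Submodule.exists_mem_ne_zero_of_ne_bot
    (LinearMap.ker_ne_bot_of_finrank_lt (f := P.domRestrict U) (hU ▸ hP))
  exact ⟨x, by simpa using hx0, by simpa using hker,
    hv.mul_inner_self_le_inner_map_self_of_mem_span hTv hc hxU⟩

end MinMax

theorem Matrix.IsHermitian.exists_ne_zero_map_eq_zero_mul_dotProduct_self_le {F : Type*}
    [AddCommGroup F] [Module ℝ F] [FiniteDimensional ℝ F] {N : ℕ} {A : Matrix (Fin N) (Fin N) ℝ}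
    (hA : A.IsHermitian) {e : Equiv.Perm (Fin N)} (he : Antitone (hA.eigenvalues ∘ e))
    {m : ℕ} (hm : m < N) (P : (Fin N → ℝ) →ₗ[ℝ] F) (hP : Module.finrank ℝ F ≤ m) :
    ∃ x ≠ 0, P x = 0 ∧ hA.eigenvalues (e ⟨m, hm⟩) * (x ⬝ᵥ x) ≤ x ⬝ᵥ A *ᵥ x := by
  let v (i : Fin (m + 1)) : EuclideanSpace ℝ (Fin N) := hA.eigenvectorBasis (e (Fin.castLE hm i))
  have hv : Orthonormal ℝ v :=
    hA.eigenvectorBasis.orthonormal.comp _ (e.injective.comp (Fin.castLE_injective hm))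
  have hAv (i) : toEuclideanLin A (v i) = hA.eigenvalues (e (Fin.castLE hm i)) • v i :=
    congrArg (WithLp.toLp 2) (hA.mulVec_eigenvectorBasis _)
  have hc (i : Fin (m + 1)) : hA.eigenvalues (e ⟨m, hm⟩) ≤ hA.eigenvalues (e (Fin.castLE hm i)) :=
    he (Fin.le_iff_val_le_val.mpr (Nat.lt_succ_iff.mp i.isLt))
  obtain ⟨x, hx0, hPx, hx⟩ := hv.exists_ne_zero_map_eq_zero_mul_inner_self_le hAv hc
    (P ∘ₗ (WithLp.linearEquiv 2 ℝ (Fin N → ℝ)).toLinearMap) (by simpa using Nat.lt_succ_of_le hP)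
  refine ⟨x.ofLp, by simpa using hx0, hPx, ?_⟩
  rw [EuclideanSpace.inner_eq_star_dotProduct, EuclideanSpace.inner_eq_star_dotProduct,
    star_trivial] at hx
  exact hx.trans_eq (dotProduct_comm _ _)

theorem Matrix.dotProduct_mulVec_le_mul_sq_sum_abs {n : Type*} [Fintype n]
    {S : Matrix n n ℝ} {M : ℝ} (hM : ∀ j k, |S j k| ≤ M) (w : n → ℝ) :
    w ⬝ᵥ S *ᵥ w ≤ M * (∑ j, |w j|) ^ 2 := by
  calc w ⬝ᵥ S *ᵥ w = ∑ j, ∑ k, w j * w k * S j k := by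
        simp only [dotProduct, mulVec, mul_sum]
        exact sum_congr rfl fun j _ => sum_congr rfl fun k _ => by ring
    _ ≤ ∑ j, ∑ k, |w j| * |w k| * M := by
        refine sum_le_sum fun j _ => sum_le_sum fun k _ => ?_
        calc w j * w k * S j k ≤ |w j * w k * S j k| := le_abs_self _
          _ = |w j| * |w k| * |S j k| := by rw [abs_mul, abs_mul]
          _ ≤ |w j| * |w k| * M := by gcongr; exact hM j k
    _ = M * (∑ j, |w j|) ^ 2 := by
        rw [sq, sum_mul_sum, mul_sum]
        exact sum_congr rfl fun j _ => by rw [mul_sum]; exact sum_congr rfl fun k _ => by ring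

theorem Matrix.dotProduct_diagonal_mul_mul_diagonal_mulVec {n R : Type*} [Fintype n]
    [DecidableEq n] [CommSemiring R] (d x : n → R) (S : Matrix n n R) :
    x ⬝ᵥ (diagonal d * S * diagonal d) *ᵥ x = (d * x) ⬝ᵥ S *ᵥ (d * x) := by
  have hd : diagonal d *ᵥ x = d * x := funext (mulVec_diagonal d x)
  have hd' : x ᵥ* diagonal d = d * x := funext fun j => (vecMul_diagonal x d j).trans (mul_comm _ _)
  rw [← mulVec_mulVec, ← mulVec_mulVec, hd, dotProduct_mulVec, hd']

theorem sq_sum_pow_mul_abs_le {N m : ℕ} {r : ℝ} (hr0 : 0 ≤ r) (hr1 : r < 1) {x : Fin N → ℝ}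
    (hx : ∀ j : Fin N, (j : ℕ) < m → x j = 0) :
    (∑ j : Fin N, r ^ (j : ℕ) * |x j|) ^ 2 ≤ r ^ (2 * m) / (1 - r ^ 2) * (x ⬝ᵥ x) := by
  have hsum : ∑ j : Fin N, r ^ (j : ℕ) * |x j|
      = ∑ j : Fin N, (if m ≤ (j : ℕ) then r ^ (j : ℕ) else 0) * |x j| := by
    refine sum_congr rfl fun j _ => ?_
    by_cases hj : m ≤ (j : ℕ)
    · simp [hj]
    · simp [hj, hx j (not_le.mp hj)]
  have htail : ∑ j : Fin N, (if m ≤ (j : ℕ) then r ^ (j : ℕ) else 0) ^ 2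
      ≤ r ^ (2 * m) / (1 - r ^ 2) :=
    calc ∑ j : Fin N, (if m ≤ (j : ℕ) then r ^ (j : ℕ) else 0) ^ 2
        = ∑ j ∈ range N, if m ≤ j then (r ^ 2) ^ j else 0 := by
          rw [Fin.sum_univ_eq_sum_range (fun j => (if m ≤ j then r ^ j else 0) ^ 2)]
          exact sum_congr rfl fun j _ => by split_ifs <;> ring
      _ = ∑ j ∈ Ico m N, (r ^ 2) ^ j := by
          rw [← sum_filter]; congr 1; ext j; simp only [mem_filter, mem_range, mem_Ico]; omega
      _ ≤ r ^ (2 * m) / (1 - r ^ 2) := by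
          rw [pow_mul]; exact geom_sum_Ico_le_of_lt_one (sq_nonneg r) (by nlinarith)
  have hxx : ∑ j, |x j| ^ 2 = x ⬝ᵥ x := by simp [dotProduct, sq]
  rw [hsum, ← hxx]
  exact (sum_mul_sq_le_sq_mul_sq _ _ _).trans
    (mul_le_mul_of_nonneg_right htail (sum_nonneg fun j _ => sq_nonneg _))

theorem Matrix.dotProduct_diagonal_pow_mul_mul_diagonal_pow_mulVec_le {N m : ℕ} {ε : ℝ}
    (hε0 : 0 ≤ ε) (hε1 : ε < 1) (S : Matrix (Fin N) (Fin N) ℝ) {x : Fin N → ℝ}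
    (hx : ∀ j : Fin N, (j : ℕ) < m → x j = 0) :
    x ⬝ᵥ (diagonal (fun i : Fin N => ε ^ (i : ℕ)) * S * diagonal fun i : Fin N => ε ^ (i : ℕ)) *ᵥ x
      ≤ ε ^ (2 * m) / (1 - ε ^ 2) * (⨆ j : Fin N, ⨆ k : Fin N, |S j k|) * (x ⬝ᵥ x) := by
  set M := ⨆ j : Fin N, ⨆ k : Fin N, |S j k|
  have hM (j k) : |S j k| ≤ M :=
    (le_ciSup (Set.finite_range fun k => |S j k|).bddAbove k).trans
      (le_ciSup (Set.finite_range fun j => ⨆ k, |S j k|).bddAbove j)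
  have hM0 : 0 ≤ M := Real.iSup_nonneg fun j => Real.iSup_nonneg fun k => abs_nonneg _
  rw [dotProduct_diagonal_mul_mul_diagonal_mulVec]
  calc _ ≤ M * (∑ j : Fin N, |ε ^ (j : ℕ) * x j|) ^ 2 := dotProduct_mulVec_le_mul_sq_sum_abs hM _
    _ = M * (∑ j : Fin N, ε ^ (j : ℕ) * |x j|) ^ 2 := by
        simp only [abs_mul, abs_of_nonneg (pow_nonneg hε0 _)]
    _ ≤ M * (ε ^ (2 * m) / (1 - ε ^ 2) * (x ⬝ᵥ x)) := by
        gcongr; exact sq_sum_pow_mul_abs_le hε0 hε1 hx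
    _ = _ := by ring

theorem ese_eigenvalue_bound_general (N : ℕ)
    (S : Matrix (Fin N) (Fin N) ℝ)
    (ε : ℝ) (hε0 : 0 < ε) (hε1 : ε < 1)
    (E : Matrix (Fin N) (Fin N) ℝ) (hE : E = Matrix.diagonal fun i : Fin N => ε ^ (i : ℕ))
    (lam : Fin N → ℝ) (hlam_dec : Antitone lam)
    (hlam : ∃ (hH : (E * S * E).IsHermitian) (e : Equiv.Perm (Fin N)),
      lam = hH.eigenvalues ∘ e)
    (m : ℕ) (hmN : m < N) :
    lam ⟨m, hmN⟩ ≤ ε ^ (2 * m) / (1 - ε ^ 2) * (⨆ j : Fin N, ⨆ k : Fin N, |S j k|) := by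
  obtain ⟨hH, e, rfl⟩ := hlam
  subst hE
  obtain ⟨x, hx0, hPx, hlower⟩ := hH.exists_ne_zero_map_eq_zero_mul_dotProduct_self_le hlam_dec
    hmN (LinearMap.funLeft ℝ ℝ (Fin.castLE hmN.le)) (by simp)
  have hx (j : Fin N) (hj : (j : ℕ) < m) : x j = 0 := congr_fun hPx ⟨j, hj⟩
  have hupper := dotProduct_diagonal_pow_mul_mul_diagonal_pow_mulVec_le hε0.le hε1 S hx
  have hxx : 0 < x ⬝ᵥ x := by simpa using dotProduct_self_star_pos_iff.mpr hx0
  exact le_of_mul_le_mul_right (hlower.trans hupper) hxx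

/-- **ESE eigenvalue bound.** If `S` is an `N × N` real symmetric positive definite matrix,
`E` is diagonal with `E i i = ε ^ i` (0-indexed, i.e. `ε^(i-1)` 1-indexed) for `0 < ε < 1`,
and `lam` lists the eigenvalues of `E * S * E` in decreasing order, then for `1 ≤ m ≤ N - 1`,
`λ_{m+1} ≤ ε^(2m) / (1 - ε²) * max_{j,k} |S j k|`. -/
theorem ese_eigenvalue_bound (N : ℕ) (hN : 0 < N)
    (S : Matrix (Fin N) (Fin N) ℝ) (hSsym : S.IsSymm) (hSpd : S.PosDef)
    (ε : ℝ) (hε0 : 0 < ε) (hε1 : ε < 1)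
    (E : Matrix (Fin N) (Fin N) ℝ) (hE : E = Matrix.diagonal fun i : Fin N => ε ^ (i : ℕ))
    (lam : Fin N → ℝ) (hlam_dec : Antitone lam)
    (hlam : ∃ (hH : (E * S * E).IsHermitian) (e : Equiv.Perm (Fin N)),
      lam = hH.eigenvalues ∘ e)
    (m : ℕ) (hm1 : 1 ≤ m) (hmN : m < N) :
    lam ⟨m, hmN⟩ ≤ ε ^ (2 * m) / (1 - ε ^ 2) * (⨆ j : Fin N, ⨆ k : Fin N, |S j k|) :=
  ese_eigenvalue_bound_general N S ε hε0 hε1 E hE lam hlam_dec hlam m hmN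
end

section
/- Let f be analytic on and inside the Bernstein ellipse E_ρ (image of the circle |z| = ρ under z ↦ (z + z^{-1})/2) for some ρ > 1, with |f(z)| ≤ M on E_ρ. Then its Chebyshev coefficients c_j = (2/π)∫_{-1}^1 f(t) T_j(t)/√(1−t²) dt (with the factor 1/π for j = 0) satisfy |c_0| ≤ M and |c_j| ≤ 2Mρ^{-j} for j ≥ 1. -/
open scoped Real

/-- The closed region bounded by the Bernstein ellipse `E_ρ`: the image of the closed
annulus `1 ≤ |z| ≤ ρ` under the Joukowsky map `z ↦ (z + z⁻¹)/2`. -/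
def bernsteinEllipseRegion (ρ : ℝ) : Set ℂ :=
  (fun z : ℂ => (z + z⁻¹) / 2) '' {z : ℂ | 1 ≤ ‖z‖ ∧ ‖z‖ ≤ ρ}

/-- The `j`-th Chebyshev coefficient of `f`:
`c_0 = (1/π) ∫ f(t)/√(1-t²) dt`, `c_j = (2/π) ∫ f(t) T_j(t)/√(1-t²) dt` for `j ≥ 1`. -/
noncomputable def chebCoeff (f : ℂ → ℂ) (j : ℕ) : ℂ :=
  ((if j = 0 then 1 else 2) / (π : ℂ)) *
    ∫ t in (-1 : ℝ)..1, f t * ((Polynomial.Chebyshev.T ℝ (j : ℤ)).eval t /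
      Real.sqrt (1 - t ^ 2) : ℝ)

/-!
Substituting `t = cos θ` turns `c_j` into `(2/π) ∫₀^π f(cos θ) cos(jθ) dθ`, and unfolding the
half period to the full circle `z = e^{iθ}` turns this into `(1/(πi)) ∮_{|z|=1} F(z) z^{-j-1} dz`
with `F(z) = f((z + z⁻¹)/2)`. The Joukowsky map sends the annulus `1 ≤ |z| ≤ ρ` onto the
Bernstein region and is a local diffeomorphism off `z = ±1`, so `F` is holomorphic on the open
annulus and the contour can be pushed out to `|z| = ρ`, where the integrand is at most
`M ρ^{-j-1}`.
-/

open Complex MeasureTheory Metric Set Filter Topology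

theorem Real.cos_image_Ioo : Real.cos '' Ioo 0 π = Ioo (-1) 1 := by
  simpa using Real.cosPartialHomeomorph.image_source_eq_target

theorem integral_inv_sqrt_one_sub_sq_smul {E : Type*} [NormedAddCommGroup E] [NormedSpace ℝ E]
    (g : ℝ → E) :
    ∫ t in (-1 : ℝ)..1, (√(1 - t ^ 2))⁻¹ • g t = ∫ θ in 0..π, g (Real.cos θ) := by
  rw [intervalIntegral.integral_of_le (by norm_num), integral_Ioc_eq_integral_Ioo,
    ← Real.cos_image_Ioo, integral_image_eq_integral_abs_deriv_smul measurableSet_Ioo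
      (fun θ _ => (Real.hasDerivAt_cos θ).hasDerivWithinAt)
      (Real.injOn_cos.mono Ioo_subset_Icc_self),
    intervalIntegral.integral_of_le Real.pi_pos.le, integral_Ioc_eq_integral_Ioo]
  refine setIntegral_congr_fun measurableSet_Ioo fun θ hθ => ?_
  have hsin : 0 < Real.sin θ := Real.sin_pos_of_pos_of_lt_pi hθ.1 hθ.2
  rw [← Real.sin_sq, Real.sqrt_sq hsin.le, abs_neg, abs_of_pos hsin, smul_inv_smul₀ hsin.ne']

theorem chebCoeff_eq_integral_cos (f : ℂ → ℂ) (j : ℕ) :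
    chebCoeff f j =
      (if j = 0 then 1 else 2) / π * ∫ θ in 0..π, f (Real.cos θ) * Real.cos (j * θ) := by
  rw [chebCoeff]
  congr 1
  convert integral_inv_sqrt_one_sub_sq_smul
    (fun t : ℝ => f t * (Polynomial.Chebyshev.T ℝ j).eval t) using 1
  · refine intervalIntegral.integral_congr fun t _ => ?_
    simp only [real_smul]
    push_cast
    ring
  · simp [Polynomial.Chebyshev.T_real_cos]

section Joukowsky

variable {ρ M : ℝ} {f : ℂ → ℂ} {z : ℂ}

noncomputable def joukowsky (z : ℂ) : ℂ := (z + z⁻¹) / 2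

theorem joukowsky_exp_mul_I (θ : ℝ) : joukowsky (exp (θ * I)) = Real.cos θ := by
  rw [joukowsky, ofReal_cos, Complex.cos, neg_mul, exp_neg]

theorem joukowsky_mem_bernsteinEllipseRegion (h1 : 1 ≤ ‖z‖) (h2 : ‖z‖ ≤ ρ) :
    joukowsky z ∈ bernsteinEllipseRegion ρ :=
  ⟨z, ⟨h1, h2⟩, rfl⟩

theorem ofReal_cos_mem_bernsteinEllipseRegion (hρ : 1 ≤ ρ) (θ : ℝ) :
    (Real.cos θ : ℂ) ∈ bernsteinEllipseRegion ρ := by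
  rw [← joukowsky_exp_mul_I]
  exact joukowsky_mem_bernsteinEllipseRegion (norm_exp_ofReal_mul_I θ).ge
    ((norm_exp_ofReal_mul_I θ).trans_le hρ)

theorem hasStrictDerivAt_joukowsky (hz : z ≠ 0) :
    HasStrictDerivAt joukowsky ((1 - (z ^ 2)⁻¹) / 2) z := by
  rw [sub_eq_add_neg]
  exact ((hasStrictDerivAt_id z).add (hasStrictDerivAt_inv hz)).div_const 2

theorem bernsteinEllipseRegion_mem_nhds_joukowsky (h1 : 1 < ‖z‖) (h2 : ‖z‖ < ρ) :
    bernsteinEllipseRegion ρ ∈ 𝓝 (joukowsky z) := by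
  have hz : z ≠ 0 := norm_pos_iff.1 (one_pos.trans h1)
  have hderiv : (1 - (z ^ 2)⁻¹) / 2 ≠ 0 := by
    rw [Ne, div_eq_zero_iff, sub_eq_zero, eq_comm, inv_eq_one, or_iff_left two_ne_zero]
    intro hz2
    have : ‖z‖ ^ 2 = 1 := by rw [← norm_pow, hz2, norm_one]
    nlinarith
  rw [← (hasStrictDerivAt_joukowsky hz).map_nhds_eq hderiv]
  have hannulus : {w : ℂ | 1 < ‖w‖ ∧ ‖w‖ < ρ} ∈ 𝓝 z :=
    (isOpen_Ioo.preimage continuous_norm).mem_nhds ⟨h1, h2⟩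
  exact mem_map.2 <| mem_of_superset hannulus fun w (hw : 1 < ‖w‖ ∧ ‖w‖ < ρ) =>
    joukowsky_mem_bernsteinEllipseRegion hw.1.le hw.2.le

theorem exp_mul_I_pow_add_inv (θ : ℝ) (j : ℕ) :
    exp (θ * I) ^ j + (exp (θ * I) ^ j)⁻¹ = 2 * Real.cos (j * θ) := by
  rw [← exp_nat_mul, ← exp_neg, ofReal_cos, Complex.cos]
  push_cast
  ring_nf

theorem integral_zero_two_pi_mul_inv_exp_mul_I_pow (g : ℂ → ℂ)
    (hg : Continuous fun θ : ℝ => g (Real.cos θ)) (j : ℕ) :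
    ∫ θ in 0..2 * π, g (Real.cos θ) * (exp (θ * I) ^ j)⁻¹ =
      2 * ∫ θ in 0..π, g (Real.cos θ) * Real.cos (j * θ) := by
  set φ : ℝ → ℂ := fun θ => g (Real.cos θ) * (exp (θ * I) ^ j)⁻¹
  have hφ : Continuous φ :=
    hg.mul <| (by fun_prop : Continuous fun θ : ℝ => exp (θ * I) ^ j).inv₀
      fun θ => pow_ne_zero j (exp_ne_zero _)
  have hreflect : ∀ θ : ℝ, φ (2 * π - θ) = g (Real.cos θ) * exp (θ * I) ^ j := by
    intro θ
    simp only [φ, Real.cos_two_pi_sub, ofReal_sub, ofReal_mul, ofReal_ofNat, sub_mul, exp_sub,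
      exp_two_pi_mul_I, one_div, inv_pow, inv_inv]
  have hsecond : ∫ θ in π..2 * π, φ θ = ∫ θ in 0..π, φ (2 * π - θ) := by
    rw [intervalIntegral.integral_comp_sub_left]
    congr 1 <;> ring
  rw [← intervalIntegral.integral_add_adjacent_intervals (hφ.intervalIntegrable 0 π)
    (hφ.intervalIntegrable π (2 * π)), hsecond, ← intervalIntegral.integral_add
    (hφ.intervalIntegrable 0 π) (g := fun θ => φ (2 * π - θ))
      ((hφ.comp (continuous_sub_left (2 * π))).intervalIntegrable 0 π),
    ← intervalIntegral.integral_const_mul]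
  refine intervalIntegral.integral_congr fun θ _ => ?_
  rw [hreflect, mul_left_comm, ← exp_mul_I_pow_add_inv]
  ring

theorem circleIntegral_comp_joukowsky_div_pow (hf : Continuous fun θ : ℝ => f (Real.cos θ))
    (j : ℕ) :
    (∮ z in C(0, 1), f (joukowsky z) / z ^ (j + 1)) =
      2 * I * ∫ θ in 0..π, f (Real.cos θ) * Real.cos (j * θ) := by
  rw [circleIntegral, mul_comm (2 : ℂ) I, mul_assoc,
    ← integral_zero_two_pi_mul_inv_exp_mul_I_pow _ hf, ← intervalIntegral.integral_const_mul]
  refine intervalIntegral.integral_congr fun θ _ => ?_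
  simp only [deriv_circleMap, circleMap_zero, ofReal_one, one_mul, joukowsky_exp_mul_I,
    smul_eq_mul]
  field_simp [exp_ne_zero]
  ring

theorem circleIntegral_comp_joukowsky_div_pow_eq (hρ : 1 ≤ ρ)
    (hf : DifferentiableOn ℂ f (bernsteinEllipseRegion ρ)) (j : ℕ) :
    (∮ z in C(0, ρ), f (joukowsky z) / z ^ (j + 1)) =
      ∮ z in C(0, 1), f (joukowsky z) / z ^ (j + 1) := by
  refine circleIntegral_eq_of_differentiable_on_annulus_off_countable one_pos hρ countable_empty
    ?_ fun z hz => ?_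
  · have hannulus : ∀ z ∈ closedBall (0 : ℂ) ρ \ ball 0 1, 1 ≤ ‖z‖ ∧ ‖z‖ ≤ ρ := fun z hz => by
      simpa [and_comm] using hz
    have hz0 : ∀ z ∈ closedBall (0 : ℂ) ρ \ ball 0 1, z ≠ 0 := fun z hz =>
      norm_pos_iff.1 (one_pos.trans_le (hannulus z hz).1)
    have hjoukowsky : ContinuousOn joukowsky (closedBall (0 : ℂ) ρ \ ball 0 1) := fun z hz =>
      (hasStrictDerivAt_joukowsky (hz0 z hz)).hasDerivAt.continuousAt.continuousWithinAt
    exact (hf.continuousOn.comp hjoukowsky fun z hz =>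
        joukowsky_mem_bernsteinEllipseRegion (hannulus z hz).1 (hannulus z hz).2).div
      (continuousOn_pow _) fun z hz => pow_ne_zero _ (hz0 z hz)
  · simp only [sdiff_empty, Set.mem_sdiff, mem_closedBall_zero_iff, mem_ball_zero_iff,
      not_le] at hz
    have hz0 : z ≠ 0 := norm_pos_iff.1 (one_pos.trans hz.2)
    exact ((hf.differentiableAt (bernsteinEllipseRegion_mem_nhds_joukowsky hz.2 hz.1)).comp z
      (hasStrictDerivAt_joukowsky hz0).hasDerivAt.differentiableAt).div
      (differentiableAt_pow _) (pow_ne_zero _ hz0)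

theorem norm_circleIntegral_comp_joukowsky_div_pow_le (hρ : 1 ≤ ρ)
    (hbound : ∀ z ∈ bernsteinEllipseRegion ρ, ‖f z‖ ≤ M) (j : ℕ) :
    ‖∮ z in C(0, ρ), f (joukowsky z) / z ^ (j + 1)‖ ≤ 2 * π * M * ρ ^ (-(j : ℤ)) := by
  have hρ0 : 0 < ρ := one_pos.trans_le hρ
  calc ‖∮ z in C(0, ρ), f (joukowsky z) / z ^ (j + 1)‖
      ≤ 2 * π * ρ * (M / ρ ^ (j + 1)) := by
        refine circleIntegral.norm_integral_le_of_norm_le_const hρ0.le fun z hz => ?_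
        rw [mem_sphere_zero_iff_norm] at hz
        rw [norm_div, norm_pow, hz]
        exact div_le_div_of_nonneg_right
          (hbound _ (joukowsky_mem_bernsteinEllipseRegion (hz ▸ hρ) hz.le)) (by positivity)
    _ = 2 * π * M * ρ ^ (-(j : ℤ)) := by
        rw [zpow_neg, zpow_natCast, pow_succ]
        field_simp

theorem norm_integral_comp_cos_mul_cos_le (hρ : 1 ≤ ρ)
    (hf : DifferentiableOn ℂ f (bernsteinEllipseRegion ρ))
    (hbound : ∀ z ∈ bernsteinEllipseRegion ρ, ‖f z‖ ≤ M) (j : ℕ) :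
    ‖∫ θ in 0..π, f (Real.cos θ) * Real.cos (j * θ)‖ ≤ π * M * ρ ^ (-(j : ℤ)) := by
  have hcont : Continuous fun θ : ℝ => f (Real.cos θ) :=
    hf.continuousOn.comp_continuous (continuous_ofReal.comp Real.continuous_cos)
      (ofReal_cos_mem_bernsteinEllipseRegion hρ)
  have hcircle := norm_circleIntegral_comp_joukowsky_div_pow_le hρ hbound j
  rw [circleIntegral_comp_joukowsky_div_pow_eq hρ hf, circleIntegral_comp_joukowsky_div_pow hcont,
    norm_mul, norm_mul, norm_I, Complex.norm_two, mul_one] at hcircle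
  linarith

theorem norm_chebCoeff_le (hρ : 1 ≤ ρ) (hf : DifferentiableOn ℂ f (bernsteinEllipseRegion ρ))
    (hbound : ∀ z ∈ bernsteinEllipseRegion ρ, ‖f z‖ ≤ M) (j : ℕ) :
    ‖chebCoeff f j‖ ≤ (if j = 0 then 1 else 2) * M * ρ ^ (-(j : ℤ)) := by
  have hc : ‖(if j = 0 then 1 else 2 : ℂ)‖ = if j = 0 then 1 else 2 := by split_ifs <;> simp
  rw [chebCoeff_eq_integral_cos, norm_mul, norm_div, hc, norm_real,
    Real.norm_of_nonneg Real.pi_pos.le]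
  calc _ ≤ (if j = 0 then 1 else 2) / π * (π * M * ρ ^ (-(j : ℤ))) := by
        gcongr
        exact norm_integral_comp_cos_mul_cos_le hρ hf hbound j
    _ = _ := by field_simp

end Joukowsky

theorem chebCoeff_decay_of_analytic_general (ρ M : ℝ) (hρ : 1 < ρ)
    (f : ℂ → ℂ) (hf : DifferentiableOn ℂ f (bernsteinEllipseRegion ρ))
    (hbound : ∀ z ∈ bernsteinEllipseRegion ρ, ‖f z‖ ≤ M) :
    ‖chebCoeff f 0‖ ≤ M ∧
    ∀ j : ℕ, 1 ≤ j → ‖chebCoeff f j‖ ≤ 2 * M * ρ ^ (-(j : ℤ)) := by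
  refine ⟨by simpa using norm_chebCoeff_le hρ.le hf hbound 0, fun j hj => ?_⟩
  simpa [Nat.one_le_iff_ne_zero.1 hj] using norm_chebCoeff_le hρ.le hf hbound j

/-- **Decay of Chebyshev coefficients of analytic functions.** If `f` is analytic on the
closed region bounded by the Bernstein ellipse `E_ρ`, `ρ > 1`, with `|f| ≤ M` there, then
`|c_0| ≤ M` and `|c_j| ≤ 2 M ρ⁻ʲ` for `j ≥ 1`. -/
theorem chebCoeff_decay_of_analytic (ρ M : ℝ) (hρ : 1 < ρ) (hM : 0 < M)
    (f : ℂ → ℂ) (hf : DifferentiableOn ℂ f (bernsteinEllipseRegion ρ))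
    (hbound : ∀ z ∈ bernsteinEllipseRegion ρ, ‖f z‖ ≤ M) :
    ‖chebCoeff f 0‖ ≤ M ∧
    ∀ j : ℕ, 1 ≤ j → ‖chebCoeff f j‖ ≤ 2 * M * ρ ^ (-(j : ℤ)) :=
  chebCoeff_decay_of_analytic_general ρ M hρ f hf hbound
end

section
/- Let J ∈ ℝ^{N×N} with J_{ij} = T_{j−1}(t_{i−1}) for points t_0,...,t_{N−1} ∈ [−1,1], and let D = diag(1, ρ^{-1}, ..., ρ^{-(N−1)}) with ρ > 1. Then for 2 ≤ j ≤ N the singular values of X = JD satisfy σ_j(X) ≤ √N · ρ^{−j+2} / √(ρ² − 1). -/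
/-!
Courant–Fischer, easy half: on the span of the eigenvectors of `XᵀX` belonging to its `j + 1`
largest eigenvalues the quadratic form `‖X v‖²` is at least `σ_{j+1}² ‖v‖²`, and this span meets
the subspace of vectors whose first `j` coordinates vanish. On that subspace only the columns
`k ≥ j` of `X = J D` contribute; their entries are at most `ρ^{-k}` because `|T_k| ≤ 1` on
`[-1, 1]`, so Cauchy–Schwarz bounds `‖X v‖²` by `N ∑_{k ≥ j} ρ^{-2k} ‖v‖²`, a geometric tail.
-/

open Matrix Finset
open scoped InnerProductSpace

section Orthonormal

variable {𝕜 E κ : Type*} [RCLike 𝕜] [NormedAddCommGroup E] [InnerProductSpace 𝕜 E] [Fintype κ]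
  {u : κ → E} {T : E →ₗ[𝕜] E} {ev : κ → ℝ}

theorem Orthonormal.mul_norm_sq_le_re_inner_map_self_of_mem_span (hu : Orthonormal 𝕜 u)
    (hT : ∀ k, T (u k) = (ev k : 𝕜) • u k) {μ : ℝ} (hμ : ∀ k, μ ≤ ev k) {v : E}
    (hv : v ∈ Submodule.span 𝕜 (Set.range u)) :
    μ * ‖v‖ ^ 2 ≤ RCLike.re ⟪v, T v⟫_𝕜 := by
  obtain ⟨c, rfl⟩ := (Submodule.mem_span_range_iff_exists_fun 𝕜).mp hv
  have hTv : T (∑ k, c k • u k) = ∑ k, (c k * ev k) • u k := by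
    simp only [map_sum, map_smul, hT, smul_smul]
  rw [hTv, ← inner_self_eq_norm_sq (𝕜 := 𝕜), hu.inner_sum, hu.inner_sum, map_sum, map_sum,
    Finset.mul_sum]
  gcongr with k
  rw [← mul_assoc, RCLike.conj_mul, mul_comm]
  norm_cast
  exact mul_le_mul_of_nonneg_left (hμ k) (by positivity)

theorem Orthonormal.le_of_forall_ker_re_inner_map_self_le {F : Type*} [AddCommGroup F]
    [Module 𝕜 F] [FiniteDimensional 𝕜 F] (hu : Orthonormal 𝕜 u)
    (hT : ∀ k, T (u k) = (ev k : 𝕜) • u k) (π : E →ₗ[𝕜] F)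
    (hπ : Module.finrank 𝕜 F < Fintype.card κ) {B : ℝ}
    (hB : ∀ v, π v = 0 → RCLike.re ⟪v, T v⟫_𝕜 ≤ B * ‖v‖ ^ 2) {μ : ℝ} (hμ : ∀ k, μ ≤ ev k) :
    μ ≤ B := by
  set U := Submodule.span 𝕜 (Set.range u)
  have hU : Module.finrank 𝕜 U = Fintype.card κ := finrank_span_eq_card hu.linearIndependent
  have : FiniteDimensional 𝕜 U := FiniteDimensional.span_of_finite 𝕜 (Set.finite_range u)
  obtain ⟨w, hw, hw0⟩ := Submodule.exists_mem_ne_zero_of_ne_bot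
    (LinearMap.ker_ne_bot_of_finrank_lt (f := π ∘ₗ U.subtype) (hU ▸ hπ))
  have hw_pos : 0 < ‖(w : E)‖ ^ 2 := by
    have : (w : E) ≠ 0 := by simpa using hw0
    positivity
  exact le_of_mul_le_mul_right
    ((hu.mul_norm_sq_le_re_inner_map_self_of_mem_span hT hμ w.2).trans (hB w hw)) hw_pos

end Orthonormal

section Matrix

variable {𝕜 m n : Type*} [RCLike 𝕜] [Fintype m] [Fintype n]

theorem Matrix.IsHermitian.toEuclideanLin_eigenvectorBasis [DecidableEq n] {A : Matrix n n 𝕜}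
    (hA : A.IsHermitian) (i : n) :
    toEuclideanLin A (hA.eigenvectorBasis i) = (hA.eigenvalues i : 𝕜) • hA.eigenvectorBasis i := by
  ext k
  have hk := congrFun (hA.mulVec_eigenvectorBasis i) k
  simp only [toLpLin_apply, PiLp.smul_apply, WithLp.ofLp_toLp] at hk ⊢
  rw [hk, Pi.smul_apply, RCLike.real_smul_eq_coe_smul (K := 𝕜)]

theorem Matrix.IsHermitian.le_of_forall_ker_re_inner_toEuclideanLin_le [DecidableEq n]
    {A : Matrix n n 𝕜} (hA : A.IsHermitian) {κ F : Type*} [Fintype κ] {f : κ → n}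
    (hf : Function.Injective f) [AddCommGroup F] [Module 𝕜 F] [FiniteDimensional 𝕜 F]
    (π : EuclideanSpace 𝕜 n →ₗ[𝕜] F) (hπ : Module.finrank 𝕜 F < Fintype.card κ) {B : ℝ}
    (hB : ∀ v, π v = 0 → RCLike.re ⟪v, toEuclideanLin A v⟫_𝕜 ≤ B * ‖v‖ ^ 2) {μ : ℝ}
    (hμ : ∀ k, μ ≤ hA.eigenvalues (f k)) :
    μ ≤ B :=
  (hA.eigenvectorBasis.orthonormal.comp f hf).le_of_forall_ker_re_inner_map_self_le
    (fun k ↦ hA.toEuclideanLin_eigenvectorBasis (f k)) π hπ hB hμ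

theorem Matrix.sum_sq_mulVec_le_of_abs_le (X : Matrix m n ℝ) {w : n → ℝ}
    (hX : ∀ i k, |X i k| ≤ w k) {s : Finset n} {v : n → ℝ} (hv : ∀ k ∉ s, v k = 0) :
    ∑ i, (X *ᵥ v) i ^ 2 ≤ Fintype.card m * (∑ k ∈ s, w k ^ 2) * ∑ k, v k ^ 2 := by
  have hrow (i : m) : (X *ᵥ v) i ^ 2 ≤ (∑ k ∈ s, w k ^ 2) * ∑ k, v k ^ 2 := by
    have hsupp : (X *ᵥ v) i = ∑ k ∈ s, X i k * v k :=
      (Finset.sum_subset (Finset.subset_univ s) fun k _ hk ↦ by simp [hv k hk]).symm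
    calc (X *ᵥ v) i ^ 2 ≤ (∑ k ∈ s, X i k ^ 2) * ∑ k ∈ s, v k ^ 2 := by
          rw [hsupp]; exact Finset.sum_mul_sq_le_sq_mul_sq s _ _
      _ ≤ (∑ k ∈ s, w k ^ 2) * ∑ k, v k ^ 2 := by
          gcongr ?_ * ?_
          · exact Finset.sum_le_sum fun k _ ↦ sq_le_sq' (abs_le.mp (hX i k)).1
              (abs_le.mp (hX i k)).2
          · exact Finset.sum_le_sum_of_subset_of_nonneg (Finset.subset_univ s)
              fun k _ _ ↦ sq_nonneg _
  calc ∑ i, (X *ᵥ v) i ^ 2 ≤ ∑ _i : m, (∑ k ∈ s, w k ^ 2) * ∑ k, v k ^ 2 :=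
        Finset.sum_le_sum fun i _ ↦ hrow i
    _ = _ := by rw [Finset.sum_const, Finset.card_univ, nsmul_eq_mul, mul_assoc]

theorem Matrix.inner_toEuclideanLin_transpose_mul_self [DecidableEq n] (X : Matrix m n ℝ)
    (v : EuclideanSpace ℝ n) :
    ⟪v, toEuclideanLin (Xᵀ * X) v⟫_ℝ = ∑ i, (X *ᵥ v.ofLp) i ^ 2 := by
  rw [EuclideanSpace.inner_eq_star_dotProduct, toLpLin_apply, WithLp.ofLp_toLp, ← mulVec_mulVec,
    star_trivial, dotProduct_comm, dotProduct_mulVec, vecMul_transpose]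
  simp only [dotProduct, sq]

end Matrix

theorem Fin.geom_sum_tail_le_of_lt_one {N j : ℕ} {r : ℝ} (hr0 : 0 ≤ r) (hr1 : r < 1) :
    ∑ k ∈ univ.filter (fun k : Fin N ↦ j ≤ (k : ℕ)), r ^ (k : ℕ) ≤ r ^ j / (1 - r) :=
  calc ∑ k ∈ univ.filter (fun k : Fin N ↦ j ≤ (k : ℕ)), r ^ (k : ℕ)
      = ∑ i ∈ (univ.filter fun k : Fin N ↦ j ≤ (k : ℕ)).map Fin.valEmbedding, r ^ i :=
        (Finset.sum_map _ Fin.valEmbedding fun i ↦ r ^ i).symm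
    _ ≤ ∑ i ∈ Ico j N, r ^ i :=
        Finset.sum_le_sum_of_subset_of_nonneg (fun i ↦ by simp; omega)
          fun _ _ _ ↦ pow_nonneg hr0 _
    _ ≤ r ^ j / (1 - r) := geom_sum_Ico_le_of_lt_one hr0 hr1

theorem Matrix.inner_toEuclideanLin_transpose_mul_self_le_of_abs_le_pow {m : Type*} [Fintype m]
    {N : ℕ} (X : Matrix m (Fin N) ℝ) {q : ℝ} (hq0 : 0 ≤ q) (hq1 : q < 1)
    (hX : ∀ i k, |X i k| ≤ q ^ (k : ℕ)) {j : ℕ} {v : EuclideanSpace ℝ (Fin N)}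
    (hv : ∀ k : Fin N, (k : ℕ) < j → v k = 0) :
    ⟪v, toEuclideanLin (Xᵀ * X) v⟫_ℝ ≤ Fintype.card m * ((q ^ 2) ^ j / (1 - q ^ 2)) * ‖v‖ ^ 2 := by
  have hvs : ∀ k ∉ univ.filter (fun k : Fin N ↦ j ≤ (k : ℕ)), v k = 0 := fun k hk ↦
    hv k (by simpa using hk)
  have htail : ∑ k ∈ univ.filter (fun k : Fin N ↦ j ≤ (k : ℕ)), (q ^ (k : ℕ)) ^ 2
      ≤ (q ^ 2) ^ j / (1 - q ^ 2) := by
    simp_rw [← pow_mul, mul_comm _ 2, pow_mul]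
    exact Fin.geom_sum_tail_le_of_lt_one (by positivity) (pow_lt_one₀ hq0 hq1 two_ne_zero)
  rw [inner_toEuclideanLin_transpose_mul_self, EuclideanSpace.real_norm_sq_eq]
  calc _ ≤ _ := X.sum_sq_mulVec_le_of_abs_le hX hvs
    _ ≤ _ := by gcongr

theorem abs_eval_chebyshevT_mul_zpow_neg_le {ρ x : ℝ} (hρ : 0 < ρ)
    (hx : x ∈ Set.Icc (-1 : ℝ) 1) (k : ℕ) :
    |(Polynomial.Chebyshev.T ℝ (k : ℤ)).eval x * ρ ^ (-(k : ℤ))| ≤ ρ⁻¹ ^ k := by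
  rw [abs_mul, _root_.zpow_neg, zpow_natCast, ← inv_pow, abs_of_pos (a := ρ⁻¹ ^ k) (by positivity)]
  exact mul_le_of_le_one_left (by positivity)
    (Polynomial.Chebyshev.abs_eval_T_real_le_one _ (abs_le.mpr hx))

theorem natCast_mul_geom_tail_inv_sq_eq {ρ : ℝ} (hρ : 1 < ρ) (N j : ℕ) :
    N * ((ρ⁻¹ ^ 2) ^ j / (1 - ρ⁻¹ ^ 2)) = (√N * ρ ^ (1 - (j : ℤ)) / √(ρ ^ 2 - 1)) ^ 2 := by
  have hρ2 : 0 < ρ ^ 2 - 1 := by nlinarith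
  rw [div_pow, mul_pow, Real.sq_sqrt (Nat.cast_nonneg N), Real.sq_sqrt hρ2.le,
    zpow_sub₀ (by positivity), zpow_one, zpow_natCast]
  simp only [inv_pow]
  field_simp
  ring

theorem chebyshev_vandermonde_singular_value_decay_general (N : ℕ)
    (ρ : ℝ) (hρ : 1 < ρ) (t : Fin N → ℝ) (ht : ∀ i, t i ∈ Set.Icc (-1 : ℝ) 1)
    (J D X : Matrix (Fin N) (Fin N) ℝ)
    (hJ : J = Matrix.of fun (i k : Fin N) => (Polynomial.Chebyshev.T ℝ ((k : ℕ) : ℤ)).eval (t i))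
    (hD : D = Matrix.diagonal fun k : Fin N => ρ ^ (-((k : ℕ) : ℤ)))
    (hX : X = J * D)
    (σv : Fin N → ℝ) (hσ_dec : Antitone σv)
    (hσ : ∃ (hH : (Xᵀ * X).IsHermitian) (e : Equiv.Perm (Fin N)),
      ∀ i, σv i = Real.sqrt (hH.eigenvalues (e i))) :
    ∀ j : Fin N, 1 ≤ (j : ℕ) →
      σv j ≤ Real.sqrt N * ρ ^ (1 - ((j : ℕ) : ℤ)) / Real.sqrt (ρ ^ 2 - 1) := by
  obtain ⟨hH, e, hσe⟩ := hσ
  intro j _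
  have hρ0 : 0 < ρ := by linarith
  have hentry (i k : Fin N) : |X i k| ≤ ρ⁻¹ ^ (k : ℕ) := by
    subst hX hD hJ
    simpa [mul_diagonal] using abs_eval_chebyshevT_mul_zpow_neg_le hρ0 (ht i) k
  have hσ_sq (i : Fin N) : σv i ^ 2 = hH.eigenvalues (e i) := by
    have hPSD : (Xᵀ * X).PosSemidef := by simpa using posSemidef_conjTranspose_mul_self X
    rw [hσe, Real.sq_sqrt (hPSD.eigenvalues_nonneg _)]
  let π : EuclideanSpace ℝ (Fin N) →ₗ[ℝ] (Fin j → ℝ) := LinearMap.pi fun i ↦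
    ContinuousLinearMap.toLinearMap (EuclideanSpace.proj (𝕜 := ℝ) (Fin.castLE j.isLt.le i))
  have hkey : σv j ^ 2 ≤ N * ((ρ⁻¹ ^ 2) ^ (j : ℕ) / (1 - ρ⁻¹ ^ 2)) := by
    refine hH.le_of_forall_ker_re_inner_toEuclideanLin_le (f := e ∘ Fin.castLE j.isLt)
      (e.injective.comp (Fin.castLE_injective _)) π (by simp) (fun v hv ↦ ?_) (fun k ↦ ?_)
    · simpa using X.inner_toEuclideanLin_transpose_mul_self_le_of_abs_le_pow (by positivity)
        (inv_lt_one_of_one_lt₀ hρ) hentry fun k hk ↦ by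
          simpa [π, Fin.castLE] using congrFun hv ⟨k, hk⟩
    · rw [Function.comp_apply, ← hσ_sq]
      exact pow_le_pow_left₀ (by rw [hσe]; positivity)
        (hσ_dec (Fin.mk_le_mk.mpr (Nat.lt_succ_iff.mp k.isLt))) 2
  refine le_of_pow_le_pow_left₀ two_ne_zero (by positivity) ?_
  rwa [← natCast_mul_geom_tail_inv_sq_eq hρ]

/-- **Singular value decay of scaled Chebyshev–Vandermonde matrices.** Let
`J i k = T_k(t_i)` for points `t_i ∈ [-1, 1]` and `D = diag(ρ⁰, ρ⁻¹, …, ρ^{-(N-1)})`,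
`ρ > 1`. If `σv` lists the singular values of `X = J * D` in decreasing order
(`σv ⟨0⟩ = σ_1`, etc.), then `σ_j(X) ≤ √N ρ^{-j+2} / √(ρ² - 1)` for `2 ≤ j ≤ N`. -/
theorem chebyshev_vandermonde_singular_value_decay (N : ℕ) (hN : 0 < N)
    (ρ : ℝ) (hρ : 1 < ρ) (t : Fin N → ℝ) (ht : ∀ i, t i ∈ Set.Icc (-1 : ℝ) 1)
    (J D X : Matrix (Fin N) (Fin N) ℝ)
    (hJ : J = Matrix.of fun (i k : Fin N) => (Polynomial.Chebyshev.T ℝ ((k : ℕ) : ℤ)).eval (t i))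
    (hD : D = Matrix.diagonal fun k : Fin N => ρ ^ (-((k : ℕ) : ℤ)))
    (hX : X = J * D)
    (σv : Fin N → ℝ) (hσ_dec : Antitone σv)
    (hσ : ∃ (hH : (Xᵀ * X).IsHermitian) (e : Equiv.Perm (Fin N)),
      ∀ i, σv i = Real.sqrt (hH.eigenvalues (e i))) :
    ∀ j : Fin N, 1 ≤ (j : ℕ) →
      σv j ≤ Real.sqrt N * ρ ^ (1 - ((j : ℕ) : ℤ)) / Real.sqrt (ρ ^ 2 - 1) :=
  chebyshev_vandermonde_singular_value_decay_general N ρ hρ t ht J D X hJ hD hX σv hσ_dec hσ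
end

section
/- Let V ∈ ℝ^{N×N} be the Vandermonde matrix V_{ij} = t_{i−1}^{j−1} with nodes t_0,...,t_{N−1} ∈ [−1,1], and D = diag(R^0, R^{-1}, ..., R^{-(N−1)}) with R > 1. Then for 2 ≤ j ≤ N, σ_j(VD) ≤ (√N / √(R² − 1)) · R^{−j+2}. -/
/-!
With `X = V D`, `σv j ^ 2` is an eigenvalue of `Xᵀ X` dominated by the eigenvalues at
`σv 0, …, σv j`. The span of those `j + 1` eigenvectors meets the `(N - j)`-dimensional space of
vectors vanishing on the coordinates `k < j`, and at a nonzero common vector the Rayleigh quotient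
of `Xᵀ X` is at least `σv j ^ 2`. On that space only the columns `k ≥ j` of `X` act; their entries
are bounded by `R⁻ᵏ`, so by Cauchy–Schwarz the Rayleigh quotient is at most
`N ∑_{k ≥ j} R⁻²ᵏ ≤ N R⁻²ʲ / (1 - R⁻²)`, which is the square of the claimed bound.
-/

open Matrix Finset Module

section Orthonormal

variable {E : Type*} [NormedAddCommGroup E] [InnerProductSpace ℝ E] {ι : Type*} [Fintype ι]
  {T : E →ₗ[ℝ] E} {u : ι → E} {a : ι → ℝ} {μ : ℝ}

theorem Orthonormal.mul_norm_sq_le_inner_map_self (hu : Orthonormal ℝ u)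
    (hTu : ∀ i, T (u i) = a i • u i) (hμ : ∀ i, μ ≤ a i) {v : E}
    (hv : v ∈ Submodule.span ℝ (Set.range u)) : μ * ‖v‖ ^ 2 ≤ inner ℝ v (T v) := by
  obtain ⟨c, rfl⟩ := (Submodule.mem_span_range_iff_exists_fun ℝ).1 hv
  have hT : T (∑ i, c i • u i) = ∑ i, (a i * c i) • u i := by
    simp only [map_sum, map_smul, hTu, smul_smul, mul_comm]
  rw [hT, ← real_inner_self_eq_norm_sq, hu.inner_sum, hu.inner_sum, mul_sum]
  refine sum_le_sum fun i _ => ?_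
  simp only [conj_trivial]
  nlinarith [hμ i, mul_self_nonneg (c i)]

/-- The easy half of the Courant–Fischer min-max principle. -/
theorem Orthonormal.le_of_inner_map_self_le [FiniteDimensional ℝ E] (hu : Orthonormal ℝ u)
    (hTu : ∀ i, T (u i) = a i • u i) (hμ : ∀ i, μ ≤ a i) {C : ℝ} (W : Submodule ℝ E)
    (hW : finrank ℝ E < Fintype.card ι + finrank ℝ W)
    (hC : ∀ v ∈ W, inner ℝ v (T v) ≤ C * ‖v‖ ^ 2) : μ ≤ C := by
  have hmeet : Submodule.span ℝ (Set.range u) ⊓ W ≠ ⊥ := by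
    intro h
    have := Submodule.finrank_add_finrank_le_of_disjoint (disjoint_iff.2 h)
    rw [finrank_span_eq_card hu.linearIndependent] at this
    omega
  obtain ⟨v, ⟨hvu, hvW⟩, hv0⟩ := Submodule.exists_mem_ne_zero_of_ne_bot hmeet
  have hv : 0 < ‖v‖ ^ 2 := by positivity
  exact le_of_mul_le_mul_right ((hu.mul_norm_sq_le_inner_map_self hTu hμ hvu).trans (hC v hvW)) hv

end Orthonormal

theorem Matrix.IsHermitian.le_of_inner_toEuclideanLin_le {n : Type*} [Fintype n] [DecidableEq n]
    {A : Matrix n n ℝ} (hA : A.IsHermitian)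
    {ι : Type*} [Fintype ι] {g : ι → n} (hg : Function.Injective g) {μ C : ℝ}
    (hμ : ∀ i, μ ≤ hA.eigenvalues (g i)) (W : Submodule ℝ (EuclideanSpace ℝ n))
    (hW : Fintype.card n < Fintype.card ι + finrank ℝ W)
    (hC : ∀ v ∈ W, inner ℝ v (toEuclideanLin A v) ≤ C * ‖v‖ ^ 2) : μ ≤ C :=
  (hA.eigenvectorBasis.orthonormal.comp g hg).le_of_inner_map_self_le
    (fun i => congrArg (WithLp.toLp 2) (hA.mulVec_eigenvectorBasis (g i))) hμ W
    (by rwa [finrank_euclideanSpace]) hC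

noncomputable def vanishingOn {n : Type*} [Fintype n] (S : Finset n) :
    Submodule ℝ (EuclideanSpace ℝ n) :=
  LinearMap.ker (LinearMap.pi fun k : S => (EuclideanSpace.proj (𝕜 := ℝ) (k : n)).toLinearMap)

theorem mem_vanishingOn {n : Type*} [Fintype n] {S : Finset n} {v : EuclideanSpace ℝ n} :
    v ∈ vanishingOn S ↔ ∀ k ∈ S, v k = 0 := by
  simp [vanishingOn, funext_iff]

theorem card_le_card_add_finrank_vanishingOn {n : Type*} [Fintype n] (S : Finset n) :
    Fintype.card n ≤ S.card + finrank ℝ (vanishingOn S) := by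
  set L := LinearMap.pi fun k : S => (EuclideanSpace.proj (𝕜 := ℝ) (k : n)).toLinearMap
  have hL := L.finrank_range_add_finrank_ker
  have hrange : finrank ℝ (LinearMap.range L) ≤ S.card := by
    simpa using Submodule.finrank_le (LinearMap.range L)
  rw [finrank_euclideanSpace] at hL
  change Fintype.card n ≤ S.card + finrank ℝ L.ker
  omega

theorem Matrix.mulVec_dotProduct_self_le {m n : Type*} [Fintype m] [Fintype n] [DecidableEq n]
    (X : Matrix m n ℝ) (S : Finset n) {v : n → ℝ} (hv : ∀ k ∈ S, v k = 0) :
    (X *ᵥ v) ⬝ᵥ (X *ᵥ v) ≤ (∑ i, ∑ k ∈ Sᶜ, X i k ^ 2) * (v ⬝ᵥ v) := by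
  have hrow : ∀ i, (X *ᵥ v) i = ∑ k ∈ Sᶜ, X i k * v k := fun i =>
    (sum_subset (subset_univ _) fun k _ hk => by simp [hv k (by simpa using hk)]).symm
  have hv2 : ∑ k ∈ Sᶜ, v k ^ 2 ≤ ∑ k, v k ^ 2 :=
    sum_le_univ_sum_of_nonneg fun k => sq_nonneg (v k)
  simp only [dotProduct, ← sq]
  rw [sum_mul]
  refine sum_le_sum fun i _ => ?_
  rw [hrow]
  exact (sum_mul_sq_le_sq_mul_sq _ _ _).trans (mul_le_mul_of_nonneg_left hv2 (by positivity))

theorem Matrix.inner_toEuclideanLin_transpose_mul_self_le {m n : Type*} [Fintype m] [Fintype n]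
    [DecidableEq n] (X : Matrix m n ℝ) (S : Finset n) {v : EuclideanSpace ℝ n}
    (hv : v ∈ vanishingOn S) :
    inner ℝ v (toEuclideanLin (Xᵀ * X) v) ≤ (∑ i, ∑ k ∈ Sᶜ, X i k ^ 2) * ‖v‖ ^ 2 := by
  have := X.mulVec_dotProduct_self_le S (mem_vanishingOn.1 hv)
  rw [← real_inner_self_eq_norm_sq, EuclideanSpace.inner_eq_star_dotProduct,
    EuclideanSpace.inner_eq_star_dotProduct]
  simpa only [toLpLin_apply, ← mulVec_mulVec, star_trivial, dotProduct_comm, dotProduct_mulVec,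
    vecMul_transpose] using this

theorem Fin.sum_Ici_pow_le_of_lt_one {K : Type*} [Field K] [LinearOrder K] [IsStrictOrderedRing K]
    {x : K} (hx₀ : 0 ≤ x) (hx₁ : x < 1) {N : ℕ} (j : Fin N) :
    ∑ k ∈ Ici j, x ^ (k : ℕ) ≤ x ^ (j : ℕ) / (1 - x) := by
  calc ∑ k ∈ Ici j, x ^ (k : ℕ) = ∑ k ∈ (Ici j).map Fin.valEmbedding, x ^ k :=
      (sum_map (Ici j) Fin.valEmbedding (x ^ ·)).symm
    _ ≤ x ^ (j : ℕ) / (1 - x) := by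
      rw [Fin.map_valEmbedding_Ici]
      exact geom_sum_Ico_le_of_lt_one hx₀ hx₁

theorem sq_pow_mul_zpow_neg_le {t : ℝ} (ht : t ∈ Set.Icc (-1 : ℝ) 1) (R : ℝ) (k : ℕ) :
    (t ^ k * R ^ (-(k : ℤ))) ^ 2 ≤ (R⁻¹ ^ 2) ^ k := by
  have ht2 : t ^ 2 ≤ 1 := sq_le_one_iff_abs_le_one t |>.2 (abs_le.2 ht)
  rw [_root_.zpow_neg, zpow_natCast, ← inv_pow, ← mul_pow, ← pow_mul, mul_comm k, pow_mul,
    mul_pow]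
  exact pow_le_pow_left₀ (by positivity) (mul_le_of_le_one_left (by positivity) ht2) k

theorem sum_sq_vandermonde_mul_diagonal_le {N : ℕ} {t : Fin N → ℝ}
    (ht : ∀ i, t i ∈ Set.Icc (-1 : ℝ) 1) {R : ℝ} (hR : 1 < R) (j : Fin N) :
    ∑ i, ∑ k ∈ (Iio j)ᶜ, ((of fun (i k : Fin N) => t i ^ (k : ℕ)) *
      diagonal fun k : Fin N => R ^ (-((k : ℕ) : ℤ))) i k ^ 2 ≤
      N * ((R⁻¹ ^ 2) ^ (j : ℕ) / (1 - R⁻¹ ^ 2)) := by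
  have hx₁ : R⁻¹ ^ 2 < 1 := pow_lt_one₀ (by positivity) (inv_lt_one_of_one_lt₀ hR) two_ne_zero
  have hIio : (Iio j)ᶜ = Ici j := by ext; simp
  calc _ ≤ ∑ _i : Fin N, ∑ k ∈ Ici j, (R⁻¹ ^ 2) ^ (k : ℕ) := by
        rw [hIio]
        gcongr with i _ k
        simpa [mul_diagonal] using sq_pow_mul_zpow_neg_le (ht i) R k
    _ ≤ ∑ _i : Fin N, (R⁻¹ ^ 2) ^ (j : ℕ) / (1 - R⁻¹ ^ 2) := by
        gcongr
        exact Fin.sum_Ici_pow_le_of_lt_one (by positivity) hx₁ j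
    _ = _ := by simp

theorem natCast_mul_geom_tail_eq_sq {R : ℝ} (hR : 1 < R) (N j : ℕ) :
    N * ((R⁻¹ ^ 2) ^ j / (1 - R⁻¹ ^ 2)) = (√N / √(R ^ 2 - 1) * R ^ (1 - (j : ℤ))) ^ 2 := by
  have hR2 : 0 < R ^ 2 - 1 := by nlinarith
  rw [mul_pow, div_pow, Real.sq_sqrt (Nat.cast_nonneg N), Real.sq_sqrt hR2.le,
    zpow_sub₀ (by positivity), zpow_one, zpow_natCast]
  simp only [inv_pow]
  field_simp
  ring

theorem vandermonde_singular_value_decay_general (N : ℕ)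
    (R : ℝ) (hR : 1 < R) (t : Fin N → ℝ) (ht : ∀ i, t i ∈ Set.Icc (-1 : ℝ) 1)
    (V D X : Matrix (Fin N) (Fin N) ℝ)
    (hV : V = Matrix.of fun (i k : Fin N) => t i ^ (k : ℕ))
    (hD : D = Matrix.diagonal fun k : Fin N => R ^ (-((k : ℕ) : ℤ)))
    (hX : X = V * D)
    (σv : Fin N → ℝ) (hσ_dec : Antitone σv)
    (hσ : ∃ (hH : (Xᵀ * X).IsHermitian) (e : Equiv.Perm (Fin N)),
      ∀ i, σv i = Real.sqrt (hH.eigenvalues (e i))) :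
    ∀ j : Fin N, 1 ≤ (j : ℕ) →
      σv j ≤ Real.sqrt N / Real.sqrt (R ^ 2 - 1) * R ^ (1 - ((j : ℕ) : ℤ)) := by
  intro j _
  obtain ⟨hH, e, hσe⟩ := hσ
  have hPSD : (Xᵀ * X).PosSemidef := by simpa using posSemidef_conjTranspose_mul_self X
  have hσ_sq (i : Fin N) : σv i ^ 2 = hH.eigenvalues (e i) := by
    rw [hσe, Real.sq_sqrt (hPSD.eigenvalues_nonneg _)]
  have heig : hH.eigenvalues (e j) ≤ N * ((R⁻¹ ^ 2) ^ (j : ℕ) / (1 - R⁻¹ ^ 2)) := by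
    refine hH.le_of_inner_toEuclideanLin_le (g := e ∘ Fin.castLE j.isLt)
      (e.injective.comp (Fin.castLE_injective _)) (fun i => ?_) (vanishingOn (Iio j)) ?_
      fun v hv => (X.inner_toEuclideanLin_transpose_mul_self_le _ hv).trans ?_
    · rw [Function.comp_apply, ← hσ_sq, ← hσ_sq]
      exact pow_le_pow_left₀ (hσe j ▸ Real.sqrt_nonneg _)
        (hσ_dec (Fin.le_def.2 (Nat.lt_succ_iff.1 i.isLt))) 2
    · have := card_le_card_add_finrank_vanishingOn (Iio j)
      simp only [Fintype.card_fin, Fin.card_Iio] at this ⊢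
      omega
    · gcongr
      rw [hX, hV, hD]
      exact sum_sq_vandermonde_mul_diagonal_le ht hR j
  rw [hσe, Real.sqrt_le_left (by positivity), ← natCast_mul_geom_tail_eq_sq hR]
  exact heig

/-- **Singular value decay of scaled Vandermonde matrices.** Let `V i k = t_i ^ k` be the
Vandermonde matrix with nodes `t_i ∈ [-1, 1]` and `D = diag(R⁰, R⁻¹, …, R^{-(N-1)})`,
`R > 1`. If `σv` lists the singular values of `V * D` in decreasing order, then
`σ_j(V D) ≤ (√N / √(R² - 1)) R^{-j+2}` for `2 ≤ j ≤ N`. -/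
theorem vandermonde_singular_value_decay (N : ℕ) (hN : 0 < N)
    (R : ℝ) (hR : 1 < R) (t : Fin N → ℝ) (ht : ∀ i, t i ∈ Set.Icc (-1 : ℝ) 1)
    (V D X : Matrix (Fin N) (Fin N) ℝ)
    (hV : V = Matrix.of fun (i k : Fin N) => t i ^ (k : ℕ))
    (hD : D = Matrix.diagonal fun k : Fin N => R ^ (-((k : ℕ) : ℤ)))
    (hX : X = V * D)
    (σv : Fin N → ℝ) (hσ_dec : Antitone σv)
    (hσ : ∃ (hH : (Xᵀ * X).IsHermitian) (e : Equiv.Perm (Fin N)),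
      ∀ i, σv i = Real.sqrt (hH.eigenvalues (e i))) :
    ∀ j : Fin N, 1 ≤ (j : ℕ) →
      σv j ≤ Real.sqrt N / Real.sqrt (R ^ 2 - 1) * R ^ (1 - ((j : ℕ) : ℤ)) :=
  vandermonde_singular_value_decay_general N R hR t ht V D X hV hD hX σv hσ_dec hσ
end

section
/- Let X = [X_{B^0} | X_{B^1} | ... | X_{B^{N−1}}] be the n×n matrix (n = N(N+1)/2) whose j-th block consists of j+1 columns X_{B^j} = ρ^{−j}[T_0(t⃗)∘T_j(s⃗) | T_1(t⃗)∘T_{j−1}(s⃗) | ... | T_j(t⃗)∘T_0(s⃗)], where t⃗, s⃗ ∈ [−1,1]^n and ∘ denotes entrywise product, with ρ > 1. Then for 2 ≤ j ≤ n, σ_j(X) ≤ (3√C₂/2) · n · ρ^{−⌊√(8(j−1)+1)/2 − 1/2⌋}, where C₂ = (1 + ρ^{-2} + ρ^{-4})/(1 − ρ^{-2})³. -/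
/-!
Let `K` be the floor in the exponent and `T` the set of columns of total degree `a + b < K`;
there are at most `K(K+1)/2 ≤ j` of them. Since `|T_k| ≤ 1` on `[-1, 1]`, every entry in a
column outside `T` is at most `ρ^{-K}` in absolute value, so these columns carry a Frobenius
mass of at most `(nρ^{-K})²`. By a dimension count, some nonzero combination `v` of the
eigenvectors of `XᵀX` belonging to `σ_0, …, σ_j` vanishes on `T`, and then
`σ_j² ‖v‖² ≤ ‖Xv‖² ≤ (nρ^{-K})² ‖v‖²` by Cauchy–Schwarz. Finally `3√C₂/2 ≥ 1`.
-/

open Matrix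

namespace Matrix

variable {n : Type*} [Fintype n] [DecidableEq n]

theorem IsHermitian.dotProduct_mulVec_sum_eigenvectorBasis {A : Matrix n n ℝ}
    (hA : A.IsHermitian) {s : Finset n} (a : s → ℝ) :
    (∑ i, a i • ⇑(hA.eigenvectorBasis i)) ⬝ᵥ A *ᵥ ∑ i, a i • ⇑(hA.eigenvectorBasis i) =
      ∑ i : s, hA.eigenvalues i * a i ^ 2 := by
  have horth := hA.eigenvectorBasis.orthonormal.comp _ (Subtype.val_injective (p := (· ∈ s)))
  have := horth.inner_sum a (fun i => hA.eigenvalues i * a i) Finset.univ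
  simp only [Function.comp_apply, EuclideanSpace.inner_eq_star_dotProduct, WithLp.ofLp_sum,
    WithLp.ofLp_smul, star_trivial, conj_trivial] at this
  simp only [mulVec_sum, mulVec_smul, hA.mulVec_eigenvectorBasis, smul_smul]
  rw [dotProduct_comm]
  simp_rw [mul_comm (a _) (hA.eigenvalues _)]
  rw [this]
  exact Finset.sum_congr rfl fun i _ => by ring

theorem IsHermitian.sum_sq_sum_eigenvectorBasis {A : Matrix n n ℝ}
    (hA : A.IsHermitian) {s : Finset n} (a : s → ℝ) :
    ∑ c, (∑ i, a i • ⇑(hA.eigenvectorBasis i)) c ^ 2 = ∑ i, a i ^ 2 := by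
  have horth := hA.eigenvectorBasis.orthonormal.comp _ (Subtype.val_injective (p := (· ∈ s)))
  have := horth.inner_sum a a Finset.univ
  simp only [Function.comp_apply, EuclideanSpace.inner_eq_star_dotProduct, WithLp.ofLp_sum,
    WithLp.ofLp_smul, star_trivial, conj_trivial, dotProduct] at this
  simpa only [sq] using this

variable {m : Type*} [Fintype m]

theorem sum_sq_mulVec_le_of_eq_zero_on (X : Matrix m n ℝ) {T : Finset n} {v : n → ℝ}
    (hv : ∀ c ∈ T, v c = 0) :
    ∑ r, (X *ᵥ v) r ^ 2 ≤ (∑ r, ∑ c ∈ Tᶜ, X r c ^ 2) * ∑ c, v c ^ 2 := by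
  have hsupp : ∀ w : n → ℝ, ∑ c, w c * v c = ∑ c ∈ Tᶜ, w c * v c := fun w =>
    (Finset.sum_subset (Finset.subset_univ _) fun c _ hc => by
      simp [hv c (by simpa using hc)]).symm
  rw [Finset.sum_mul]
  refine Finset.sum_le_sum fun r _ => ?_
  calc (X *ᵥ v) r ^ 2 = (∑ c ∈ Tᶜ, X r c * v c) ^ 2 := by rw [← hsupp]; rfl
    _ ≤ (∑ c ∈ Tᶜ, X r c ^ 2) * ∑ c ∈ Tᶜ, v c ^ 2 := Finset.sum_mul_sq_le_sq_mul_sq _ _ _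
    _ ≤ (∑ c ∈ Tᶜ, X r c ^ 2) * ∑ c, v c ^ 2 :=
      mul_le_mul_of_nonneg_left (Finset.sum_le_sum_of_subset_of_nonneg (Finset.subset_univ _)
        fun c _ _ => sq_nonneg _) (Finset.sum_nonneg fun c _ => sq_nonneg _)

theorem exists_mem_eigenvalues_le_sum_sq_compl (X : Matrix m n ℝ) (hH : (Xᵀ * X).IsHermitian)
    {S T : Finset n} (hST : T.card < S.card) :
    ∃ i ∈ S, hH.eigenvalues i ≤ ∑ r, ∑ c ∈ Tᶜ, X r c ^ 2 := by
  set F := ∑ r, ∑ c ∈ Tᶜ, X r c ^ 2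
  let restrictToT : (S → ℝ) →ₗ[ℝ] (T → ℝ) := LinearMap.funLeft ℝ ℝ (Subtype.val : T → n) ∘ₗ
    Fintype.linearCombination ℝ fun i : S => ⇑(hH.eigenvectorBasis i)
  obtain ⟨a, ha, ha0⟩ := (Submodule.ne_bot_iff _).mp
    (LinearMap.ker_ne_bot_of_finrank_lt (f := restrictToT) (by simpa using hST))
  set v := ∑ i, a i • ⇑(hH.eigenvectorBasis i)
  have hvT : ∀ c ∈ T, v c = 0 := fun c hc => by
    simpa [restrictToT, v, Fintype.linearCombination_apply] using congrFun ha ⟨c, hc⟩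
  obtain ⟨i₀, hi₀⟩ := Function.ne_iff.mp ha0
  by_contra! hlarge
  have hquad : ∑ r, (X *ᵥ v) r ^ 2 = ∑ i : S, hH.eigenvalues i * a i ^ 2 := by
    rw [← hH.dotProduct_mulVec_sum_eigenvectorBasis, ← mulVec_mulVec, dotProduct_mulVec,
      vecMul_transpose]
    simp only [dotProduct, sq, v]
  have hgap : 0 < ∑ i : S, (hH.eigenvalues i - F) * a i ^ 2 :=
    Finset.sum_pos' (fun i _ => mul_nonneg (sub_nonneg.mpr (hlarge i i.2).le) (sq_nonneg _))
      ⟨i₀, Finset.mem_univ _, mul_pos (sub_pos.mpr (hlarge i₀ i₀.2)) (sq_pos_of_ne_zero hi₀)⟩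
  have hbound := sum_sq_mulVec_le_of_eq_zero_on X hvT
  rw [hquad, hH.sum_sq_sum_eigenvectorBasis] at hbound
  simp only [sub_mul, Finset.sum_sub_distrib, ← Finset.mul_sum] at hgap
  linarith

theorem sum_sum_compl_sq_le (X : Matrix m n ℝ) {T : Finset n} {ε : ℝ}
    (hε : ∀ r, ∀ c ∉ T, |X r c| ≤ ε) :
    ∑ r, ∑ c ∈ Tᶜ, X r c ^ 2 ≤ Fintype.card m * (Fintype.card n * ε ^ 2) := by
  have hentry : ∀ r, ∀ c ∈ Tᶜ, X r c ^ 2 ≤ ε ^ 2 := fun r c hc =>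
    sq_le_sq' (abs_le.mp (hε r c (Finset.mem_compl.mp hc))).1
      (abs_le.mp (hε r c (Finset.mem_compl.mp hc))).2
  calc ∑ r, ∑ c ∈ Tᶜ, X r c ^ 2 ≤ ∑ _r : m, Tᶜ.card * ε ^ 2 :=
        Finset.sum_le_sum fun r _ => by
          simpa using Finset.sum_le_card_nsmul _ _ _ (hentry r)
    _ ≤ Fintype.card m * (Fintype.card n * ε ^ 2) := by
      rw [Finset.sum_const, Finset.card_univ, nsmul_eq_mul]
      gcongr
      exact_mod_cast Tᶜ.card_le_univ

theorem le_sqrt_sum_sq_compl_of_card_le {k : ℕ} (X : Matrix m (Fin k) ℝ)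
    (hH : (Xᵀ * X).IsHermitian) (e : Equiv.Perm (Fin k)) {σv : Fin k → ℝ} (hσv : Antitone σv)
    (hσ : ∀ i, σv i = √(hH.eigenvalues (e i))) {j : Fin k} {T : Finset (Fin k)}
    (hT : T.card ≤ j) :
    σv j ≤ √(∑ r, ∑ c ∈ Tᶜ, X r c ^ 2) := by
  obtain ⟨_, hi, hle⟩ := exists_mem_eigenvalues_le_sum_sq_compl X hH
    (S := (Finset.Iic j).map e.toEmbedding) (by simpa using Nat.lt_succ_of_le hT)
  obtain ⟨i, hij, rfl⟩ := Finset.mem_map.mp hi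
  calc σv j ≤ σv i := hσv (Finset.mem_Iic.mp hij)
    _ ≤ _ := (hσ i).trans_le (Real.sqrt_le_sqrt hle)

end Matrix

theorem card_filter_add_lt_mul_two_le {ι : Type*} [Fintype ι] {f : ι → ℕ × ℕ}
    (hf : Function.Injective f) (K : ℕ) :
    (Finset.univ.filter fun c => (f c).1 + (f c).2 < K).card * 2 ≤ K * (K + 1) := by
  have himage : (Finset.univ.filter fun c => (f c).1 + (f c).2 < K).image f ⊆
      (Finset.range K).biUnion Finset.HasAntidiagonal.antidiagonal := by
    intro p hp
    obtain ⟨c, hc, rfl⟩ := Finset.mem_image.mp hp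
    simpa using (Finset.mem_filter.mp hc).2
  have hcard := (Finset.card_le_card himage).trans Finset.card_biUnion_le
  rw [Finset.card_image_of_injective _ hf] at hcard
  have hgauss :
      (∑ i ∈ Finset.range K, (Finset.HasAntidiagonal.antidiagonal i).card) * 2 = K * (K + 1) := by
    simp only [Finset.Nat.card_antidiagonal]
    have := Finset.sum_range_id_mul_two (K + 1)
    rw [Finset.sum_range_succ'] at this
    simpa [mul_comm] using this
  omega

theorem exists_natCast_eq_floor_and_mul_succ_le (j : ℕ) :
    ∃ K : ℕ, ⌊√(8 * (j : ℝ) + 1) / 2 - 1 / 2⌋ = K ∧ K * (K + 1) ≤ 2 * j := by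
  set y := √(8 * (j : ℝ) + 1) / 2 - 1 / 2 with hy
  have hsqrt : 1 ≤ √(8 * (j : ℝ) + 1) :=
    Real.one_le_sqrt.mpr (le_add_of_nonneg_left (by positivity))
  refine ⟨⌊y⌋₊, (Int.natCast_floor_eq_floor (by linarith)).symm, ?_⟩
  have hK : (⌊y⌋₊ : ℝ) ≤ y := Nat.floor_le (by linarith)
  have hsq : (2 * (⌊y⌋₊ : ℝ) + 1) ^ 2 ≤ 8 * j + 1 := by
    rw [← Real.sq_sqrt (by positivity : (0 : ℝ) ≤ 8 * j + 1)]
    exact pow_le_pow_left₀ (by positivity) (by linarith) 2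
  exact_mod_cast (by nlinarith : (⌊y⌋₊ : ℝ) * (⌊y⌋₊ + 1) ≤ 2 * j)

theorem one_le_one_add_add_sq_div_one_sub_pow_three {q : ℝ} (hq₀ : 0 ≤ q) (hq₁ : q < 1) :
    1 ≤ (1 + q + q ^ 2) / (1 - q) ^ 3 := by
  rw [one_le_div (by positivity)]
  nlinarith [pow_le_one₀ (by linarith : 0 ≤ 1 - q) (by linarith : 1 - q ≤ 1) (n := 3)]

open Polynomial.Chebyshev in
theorem abs_zpow_neg_mul_eval_T_mul_eval_T_le {ρ : ℝ} (hρ : 1 ≤ ρ) {a b K : ℕ}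
    (hK : K ≤ a + b) {x y : ℝ} (hx : |x| ≤ 1) (hy : |y| ≤ 1) :
    |ρ ^ (-((a : ℤ) + b)) * ((T ℝ a).eval x * (T ℝ b).eval y)| ≤ ρ ^ (-(K : ℤ)) := by
  have hρ₀ : 0 < ρ := one_pos.trans_le hρ
  rw [abs_mul, abs_mul, abs_of_pos (zpow_pos hρ₀ _)]
  calc ρ ^ (-((a : ℤ) + b)) * (|(T ℝ a).eval x| * |(T ℝ b).eval y|)
        ≤ ρ ^ (-((a : ℤ) + b)) * 1 := by
        gcongr
        exact mul_le_one₀ (abs_eval_T_real_le_one _ hx) (abs_nonneg _)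
          (abs_eval_T_real_le_one _ hy)
    _ ≤ ρ ^ (-(K : ℤ)) := by
      rw [mul_one]
      exact zpow_le_zpow_right₀ hρ (by omega)

theorem cheb2d_design_matrix_singular_value_decay_general (N n : ℕ) (ρ : ℝ) (hρ : 1 < ρ)
    (t s : Fin n → ℝ) (ht : ∀ i, t i ∈ Set.Icc (-1 : ℝ) 1)
    (hs : ∀ i, s i ∈ Set.Icc (-1 : ℝ) 1)
    (col : Fin n → ℕ × ℕ)
    (hcol : Set.BijOn col Set.univ {p : ℕ × ℕ | p.1 + p.2 ≤ N - 1})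
    (X : Matrix (Fin n) (Fin n) ℝ)
    (hX : X = Matrix.of fun (i c : Fin n) =>
      ρ ^ (-(((col c).1 : ℤ) + (col c).2)) *
        ((Polynomial.Chebyshev.T ℝ ((col c).1 : ℤ)).eval (t i) *
          (Polynomial.Chebyshev.T ℝ ((col c).2 : ℤ)).eval (s i)))
    (σv : Fin n → ℝ) (hσ_dec : Antitone σv)
    (hσ : ∃ (hH : (Xᵀ * X).IsHermitian) (e : Equiv.Perm (Fin n)),
      ∀ i, σv i = Real.sqrt (hH.eigenvalues (e i)))
    (C₂ : ℝ) (hC₂ : C₂ = (1 + ρ ^ (-2 : ℤ) + ρ ^ (-4 : ℤ)) / (1 - ρ ^ (-2 : ℤ)) ^ 3) :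
    ∀ j : Fin n, 1 ≤ (j : ℕ) →
      σv j ≤ 3 * Real.sqrt C₂ / 2 * n *
        ρ ^ (-⌊Real.sqrt (8 * ((j : ℕ) : ℝ) + 1) / 2 - 1 / 2⌋) := by
  intro j _
  obtain ⟨hH, e, hσe⟩ := hσ
  obtain ⟨K, hK, hKj⟩ := exists_natCast_eq_floor_and_mul_succ_le j
  set T := Finset.univ.filter fun c : Fin n => (col c).1 + (col c).2 < K
  have hT : T.card ≤ j := by
    have hcard : T.card * 2 ≤ K * (K + 1) :=
      card_filter_add_lt_mul_two_le (Set.injOn_univ.mp hcol.injOn) K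
    omega
  have hentry : ∀ r, ∀ c ∉ T, |X r c| ≤ ρ ^ (-(K : ℤ)) := fun r c hc => by
    rw [hX]
    exact abs_zpow_neg_mul_eval_T_mul_eval_T_le hρ.le (by simpa [T] using hc)
      (abs_le.mpr (ht r)) (abs_le.mpr (hs r))
  have hC₂_ge : 1 ≤ C₂ := by
    rw [hC₂, show ρ ^ (-4 : ℤ) = (ρ ^ (-2 : ℤ)) ^ 2 by
      rw [← zpow_natCast, ← _root_.zpow_mul]; norm_num]
    exact one_le_one_add_add_sq_div_one_sub_pow_three (by positivity)
      (zpow_lt_one_of_neg₀ hρ (by norm_num))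
  have hsqrtC₂ : 1 ≤ √C₂ := Real.one_le_sqrt.mpr hC₂_ge
  have hρK : 0 ≤ ρ ^ (-(K : ℤ)) := by positivity
  calc σv j ≤ √(∑ r, ∑ c ∈ Tᶜ, X r c ^ 2) :=
        X.le_sqrt_sum_sq_compl_of_card_le hH e hσ_dec hσe hT
    _ ≤ √((n * ρ ^ (-(K : ℤ))) ^ 2) :=
        Real.sqrt_le_sqrt ((X.sum_sum_compl_sq_le hentry).trans_eq
          (by rw [Fintype.card_fin]; ring))
    _ = n * ρ ^ (-(K : ℤ)) := Real.sqrt_sq (by positivity)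
    _ ≤ 3 * √C₂ / 2 * n * ρ ^ (-(K : ℤ)) := by
        nlinarith [mul_nonneg (Nat.cast_nonneg (α := ℝ) n) hρK]
    _ = _ := by rw [hK]

/-- **Singular value decay of the 2D scaled Chebyshev design matrix.** Let
`n = N(N+1)/2` and let `X` be the `n × n` matrix whose columns, enumerated by a bijection
`col` onto the pairs `(a, b)` with `a + b ≤ N - 1` (the `j`-th block consisting of the
`j + 1` columns with `a + b = j`), are `ρ^{-(a+b)} T_a(t⃗) ∘ T_b(s⃗)` (entrywise product),
with `t⃗, s⃗ ∈ [-1,1]ⁿ` and `ρ > 1`. If `σv` lists the singular values of `X` in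
decreasing order, then for `2 ≤ j ≤ n`,
`σ_j(X) ≤ (3 √C₂ / 2) n ρ^{-⌊√(8(j-1)+1)/2 - 1/2⌋}` where
`C₂ = (1 + ρ⁻² + ρ⁻⁴)/(1 - ρ⁻²)³`. -/
theorem cheb2d_design_matrix_singular_value_decay (N n : ℕ) (hN : 1 ≤ N)
    (hn : n = N * (N + 1) / 2) (ρ : ℝ) (hρ : 1 < ρ)
    (t s : Fin n → ℝ) (ht : ∀ i, t i ∈ Set.Icc (-1 : ℝ) 1)
    (hs : ∀ i, s i ∈ Set.Icc (-1 : ℝ) 1)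
    (col : Fin n → ℕ × ℕ)
    (hcol : Set.BijOn col Set.univ {p : ℕ × ℕ | p.1 + p.2 ≤ N - 1})
    (X : Matrix (Fin n) (Fin n) ℝ)
    (hX : X = Matrix.of fun (i c : Fin n) =>
      ρ ^ (-(((col c).1 : ℤ) + (col c).2)) *
        ((Polynomial.Chebyshev.T ℝ ((col c).1 : ℤ)).eval (t i) *
          (Polynomial.Chebyshev.T ℝ ((col c).2 : ℤ)).eval (s i)))
    (σv : Fin n → ℝ) (hσ_dec : Antitone σv)
    (hσ : ∃ (hH : (Xᵀ * X).IsHermitian) (e : Equiv.Perm (Fin n)),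
      ∀ i, σv i = Real.sqrt (hH.eigenvalues (e i)))
    (C₂ : ℝ) (hC₂ : C₂ = (1 + ρ ^ (-2 : ℤ) + ρ ^ (-4 : ℤ)) / (1 - ρ ^ (-2 : ℤ)) ^ 3) :
    ∀ j : Fin n, 1 ≤ (j : ℕ) →
      σv j ≤ 3 * Real.sqrt C₂ / 2 * n *
        ρ ^ (-⌊Real.sqrt (8 * ((j : ℕ) : ℝ) + 1) / 2 - 1 / 2⌋) :=
  cheb2d_design_matrix_singular_value_decay_general N n ρ hρ t s ht hs col hcol X hX σv hσ_dec hσ C₂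
    hC₂
end
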